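/- (Entropy bound for variable-length messages; Eqs. (57)–(62) of the converse.) Let M be a random variable on a finite probability space taking values in the set of binary strings of length at least 1, and let L = len(M) denote its length. Then (a) H₂(M) ≤ E[L] + H₂(L); and (b) if E[L] ≤ m for a real number m > 1, then H₂(L) ≤ m·h_b(1/m), and consequently H₂(M) ≤ m·(1 + h_b(1/m)). -/

import Mathlib

open Finset

/-- A probability mass function on a finite type. -/
def IsPMF {α : Type*} [Fintype α] (p : α → ℝ) : Prop :=
  (∀ a, 0 ≤ p a) ∧ ∑ a, p a = 1

/-- `Pr[W = a]` for a random variable `W` on a finite probability space with pmf `p`. -/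
noncomputable def probOf {Ω : Type*} [Fintype Ω] (p : Ω → ℝ) {α : Type*} [DecidableEq α]
    (W : Ω → α) (a : α) : ℝ :=
  ∑ ω ∈ univ.filter (fun ω => W ω = a), p ω

/-- Shannon entropy in bits `H₂(W) = −∑_w Pr[W=w] log₂ Pr[W=w]` of a discrete random
variable `W` on a finite probability space, with `0·log₂ 0 = 0` (automatic in Lean). -/
noncomputable def entropyRV {Ω : Type*} [Fintype Ω] (p : Ω → ℝ) {α : Type*} [DecidableEq α]
    (W : Ω → α) : ℝ :=
  -∑ a ∈ univ.image W, probOf p W a * Real.logb 2 (probOf p W a)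

/-- The binary entropy function `h_b(p) = −p log₂ p − (1−p) log₂(1−p)`. -/
noncomputable def binEnt (p : ℝ) : ℝ :=
  -(p * Real.logb 2 p) - (1 - p) * Real.logb 2 (1 - p)

/-!
Both bounds are Gibbs' inequality `H₂(W) ≤ E[-log₂ g(W)]` for a subprobability weight `g`.
For (a) take `g x = 2^(-|x|) · Pr[L = |x|]`, a subprobability because there are at most `2^ℓ`
strings of length `ℓ`. For (b) take the geometric weight `g ℓ = q (1 - q)^(ℓ - 1)` with
`q = 1/m`: its cross entropy `-log₂ q - (E[L] - 1) log₂ (1 - q)` is at most `m · h_b(1/m)`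
when `E[L] ≤ m`.
-/

open Real

section FiniteProbability

variable {Ω : Type*} [Fintype Ω] {p : Ω → ℝ} {α : Type*} [DecidableEq α]

lemma probOf_nonneg (hp : ∀ ω, 0 ≤ p ω) (W : Ω → α) (a : α) : 0 ≤ probOf p W a :=
  sum_nonneg fun ω _ => hp ω

lemma le_probOf_apply (hp : ∀ ω, 0 ≤ p ω) (W : Ω → α) (ω : Ω) : p ω ≤ probOf p W (W ω) :=
  single_le_sum (fun ω _ => hp ω) (by simp)

lemma probOf_le_probOf_comp (hp : ∀ ω, 0 ≤ p ω) (W : Ω → α) {β : Type*} [DecidableEq β]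
    (f : α → β) (a : α) : probOf p W a ≤ probOf p (f ∘ W) (f a) :=
  sum_le_sum_of_subset_of_nonneg (fun ω => by simp +contextual) fun ω _ _ => hp ω

lemma sum_image_probOf_mul (p : Ω → ℝ) (W : Ω → α) (F : α → ℝ) :
    ∑ a ∈ univ.image W, probOf p W a * F a = ∑ ω, p ω * F (W ω) := by
  rw [← sum_fiberwise_of_maps_to (g := W) (fun ω _ => mem_image_of_mem W (mem_univ ω))]
  refine sum_congr rfl fun a _ => ?_
  rw [probOf, sum_mul]
  exact sum_congr rfl fun ω hω => by rw [(mem_filter.mp hω).2]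

lemma sum_image_probOf (hp : IsPMF p) (W : Ω → α) : ∑ a ∈ univ.image W, probOf p W a = 1 := by
  simpa [hp.2] using sum_image_probOf_mul p W fun _ => 1

lemma entropyRV_eq_neg_sum (p : Ω → ℝ) (W : Ω → α) :
    entropyRV p W = -∑ ω, p ω * logb 2 (probOf p W (W ω)) := by
  rw [entropyRV, sum_image_probOf_mul p W fun a => logb 2 (probOf p W a)]

end FiniteProbability

lemma mul_logb_le_mul_logb_add {q g : ℝ} (hq : 0 ≤ q) (hg : 0 ≤ g) (hqg : 0 < q → 0 < g) :
    q * logb 2 g ≤ q * logb 2 q + (g - q) / log 2 := by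
  rcases hq.eq_or_lt with rfl | hq
  · simpa using div_nonneg hg (log_nonneg one_le_two)
  have hg := hqg hq
  have key := mul_le_mul_of_nonneg_left (log_le_sub_one_of_pos (div_pos hg hq)) hq.le
  rw [log_div hg.ne' hq.ne', mul_sub_one, mul_div_cancel₀ _ hq.ne'] at key
  calc q * logb 2 g = q * logb 2 q + q * (log g - log q) / log 2 := by simp only [logb]; ring
    _ ≤ q * logb 2 q + (g - q) / log 2 := by gcongr

/-- Gibbs' inequality. -/
theorem entropyRV_le_neg_sum_mul_logb {Ω : Type*} [Fintype Ω] {p : Ω → ℝ} (hp : IsPMF p)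
    {α : Type*} [DecidableEq α] (W : Ω → α) {g : α → ℝ} (hg : ∀ a, 0 ≤ g a)
    (hpos : ∀ a, 0 < probOf p W a → 0 < g a) (hsum : ∑ a ∈ univ.image W, g a ≤ 1) :
    entropyRV p W ≤ -∑ ω, p ω * logb 2 (g (W ω)) := by
  rw [entropyRV, ← sum_image_probOf_mul p W fun a => logb 2 (g a), neg_le_neg_iff]
  calc ∑ a ∈ univ.image W, probOf p W a * logb 2 (g a)
      ≤ ∑ a ∈ univ.image W,
          (probOf p W a * logb 2 (probOf p W a) + (g a - probOf p W a) / log 2) :=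
        sum_le_sum fun a _ => mul_logb_le_mul_logb_add (probOf_nonneg hp.1 W a) (hg a) (hpos a)
    _ = ∑ a ∈ univ.image W, probOf p W a * logb 2 (probOf p W a)
          + (∑ a ∈ univ.image W, g a - 1) / log 2 := by
        rw [sum_add_distrib, ← sum_div, sum_sub_distrib, sum_image_probOf hp]
    _ ≤ ∑ a ∈ univ.image W, probOf p W a * logb 2 (probOf p W a) := by
        have : (∑ a ∈ univ.image W, g a - 1) / log 2 ≤ 0 :=
          div_nonpos_of_nonpos_of_nonneg (by linarith) (log_pos one_lt_two).le
        linarith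

lemma sum_inv_card_pow_length_mul_le {α : Type*} [Fintype α] [DecidableEq α]
    (S : Finset (List α)) {w : ℕ → ℝ} (hw : ∀ n, 0 ≤ w n) :
    ∑ x ∈ S, (Fintype.card α : ℝ)⁻¹ ^ x.length * w x.length ≤ ∑ n ∈ S.image List.length, w n := by
  rw [← sum_fiberwise_of_maps_to (g := List.length) fun x hx => mem_image_of_mem _ hx]
  refine sum_le_sum fun n _ => ?_
  have hcard : ((S.filter fun x => x.length = n).card : ℝ) ≤ (Fintype.card α : ℝ) ^ n := by
    exact_mod_cast card_filter_length_eq_le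
  set D : ℝ := (Fintype.card α : ℝ)
  calc ∑ x ∈ S.filter (fun x => x.length = n), D⁻¹ ^ x.length * w x.length
      = (S.filter fun x => x.length = n).card * D⁻¹ ^ n * w n := by
        rw [sum_congr rfl fun x hx => by rw [(mem_filter.mp hx).2], sum_const, nsmul_eq_mul,
          mul_assoc]
    _ ≤ D ^ n * D⁻¹ ^ n * w n := mul_le_mul_of_nonneg_right (by gcongr) (hw n)
    _ ≤ w n := by
        rw [← mul_pow]
        exact mul_le_of_le_one_left (hw n) (pow_le_one₀ (by positivity) mul_inv_le_one)

theorem entropyRV_le_expect_length_mul_add_entropyRV_length {Ω : Type*} [Fintype Ω]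
    {p : Ω → ℝ} (hp : IsPMF p) {α : Type*} [Fintype α] [Nonempty α] [DecidableEq α]
    (M : Ω → List α) :
    entropyRV p M ≤ (∑ ω, p ω * ((M ω).length : ℝ)) * logb 2 (Fintype.card α)
      + entropyRV p (fun ω => (M ω).length) := by
  set L : Ω → ℕ := fun ω => (M ω).length
  set D : ℝ := (Fintype.card α : ℝ)
  set g : List α → ℝ := fun x => D⁻¹ ^ x.length * probOf p L x.length
  have hg : ∀ x, 0 ≤ g x := fun x => mul_nonneg (by positivity) (probOf_nonneg hp.1 L _)
  have hpos : ∀ x, 0 < probOf p M x → 0 < g x := fun x hx =>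
    mul_pos (by positivity) (hx.trans_le (probOf_le_probOf_comp hp.1 M List.length x))
  have hsum : ∑ x ∈ univ.image M, g x ≤ 1 := by
    refine (sum_inv_card_pow_length_mul_le _ (probOf_nonneg hp.1 L)).trans ?_
    rw [image_image]
    exact (sum_image_probOf hp L).le
  have hterm : ∀ ω, p ω * logb 2 (g (M ω))
      = p ω * logb 2 (probOf p L (L ω)) - p ω * L ω * logb 2 D := by
    intro ω
    rcases (hp.1 ω).eq_or_lt with hω | hω
    · simp [← hω]
    have hPL := hω.trans_le (le_probOf_apply hp.1 L ω)
    simp only [g]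
    rw [logb_mul (by positivity) hPL.ne', logb_pow, logb_inv]
    ring
  calc entropyRV p M ≤ -∑ ω, p ω * logb 2 (g (M ω)) :=
        entropyRV_le_neg_sum_mul_logb hp M hg hpos hsum
    _ = _ := by
        rw [entropyRV_eq_neg_sum p L, sum_congr rfl fun ω _ => hterm ω, sum_sub_distrib, sum_mul]
        ring

lemma sum_mul_one_sub_pow_pred_le_one {q : ℝ} (hq0 : 0 < q) (hq1 : q ≤ 1) {s : Finset ℕ}
    (hs : ∀ n ∈ s, 1 ≤ n) : ∑ n ∈ s, q * (1 - q) ^ (n - 1) ≤ 1 := by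
  have hinj : Set.InjOn (fun n => n - 1) s := fun a ha b hb hab => by
    have := hs a ha; have := hs b hb; simp only at hab; omega
  have hgeom : HasSum (fun k => q * (1 - q) ^ k) 1 := by
    have := (hasSum_geometric_of_lt_one (r := 1 - q) (by linarith) (by linarith)).mul_left q
    rwa [sub_sub_cancel, mul_inv_cancel₀ hq0.ne'] at this
  rw [← sum_image (f := fun k => q * (1 - q) ^ k) hinj]
  refine (hgeom.summable.sum_le_tsum _ fun k _ => ?_).trans_eq hgeom.tsum_eq
  exact mul_nonneg hq0.le (pow_nonneg (by linarith) k)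

lemma mul_binEnt_one_div {m : ℝ} (hm : 0 < m) :
    m * binEnt (1 / m) = -logb 2 (1 / m) - (m - 1) * logb 2 (1 - 1 / m) := by
  rw [binEnt]
  field_simp

theorem entropyRV_le_mul_binEnt_of_expect_le {Ω : Type*} [Fintype Ω] {p : Ω → ℝ}
    (hp : IsPMF p) {N : Ω → ℕ} (hN : ∀ ω, 1 ≤ N ω) {m : ℝ} (hm : 1 < m)
    (hE : ∑ ω, p ω * (N ω : ℝ) ≤ m) : entropyRV p N ≤ m * binEnt (1 / m) := by
  set q := 1 / m
  have hq0 : 0 < q := by positivity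
  have hq1 : q < 1 := (div_lt_one (by linarith)).mpr hm
  set g : ℕ → ℝ := fun n => q * (1 - q) ^ (n - 1)
  have hg : ∀ n, 0 < g n := fun n => mul_pos hq0 (pow_pos (by linarith) _)
  have hsum : ∑ n ∈ univ.image N, g n ≤ 1 :=
    sum_mul_one_sub_pow_pred_le_one hq0 hq1.le fun n hn => by
      obtain ⟨ω, -, rfl⟩ := mem_image.mp hn
      exact hN ω
  have hterm : ∀ ω, p ω * logb 2 (g (N ω))
      = p ω * logb 2 q + (p ω * N ω - p ω) * logb 2 (1 - q) := by
    intro ω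
    simp only [g]
    rw [logb_mul hq0.ne' (pow_pos (by linarith) _).ne', logb_pow, Nat.cast_sub (hN ω)]
    push_cast
    ring
  have hlog : logb 2 (1 - q) ≤ 0 := logb_nonpos one_lt_two (by linarith) (by linarith)
  calc entropyRV p N ≤ -∑ ω, p ω * logb 2 (g (N ω)) :=
        entropyRV_le_neg_sum_mul_logb hp N (fun n => (hg n).le) (fun n _ => hg n) hsum
    _ = -logb 2 q - (∑ ω, p ω * (N ω : ℝ) - 1) * logb 2 (1 - q) := by
        rw [sum_congr rfl fun ω _ => hterm ω, sum_add_distrib, ← sum_mul, ← sum_mul,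
          sum_sub_distrib, hp.2]
        ring
    _ ≤ -logb 2 q - (m - 1) * logb 2 (1 - q) := by
        linarith [mul_le_mul_of_nonpos_right (sub_le_sub_right hE 1) hlog]
    _ = m * binEnt q := (mul_binEnt_one_div (by linarith)).symm

/-- **Entropy bound for variable-length messages (Eqs. (57)–(62) of the converse).**
For a random bit-string `M` of length `L = len(M) ≥ 1`:
(a) `H₂(M) ≤ E[L] + H₂(L)`; and (b) if `E[L] ≤ m` with `m > 1`, then
`H₂(L) ≤ m·h_b(1/m)` and consequently `H₂(M) ≤ m·(1 + h_b(1/m))`. -/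
theorem entropy_of_variable_length_message
    {Ω : Type*} [Fintype Ω] (p : Ω → ℝ) (hp : IsPMF p)
    (M : Ω → List Bool) (hlen : ∀ ω, 1 ≤ (M ω).length) :
    entropyRV p M ≤ (∑ ω, p ω * ((M ω).length : ℝ))
        + entropyRV p (fun ω => (M ω).length) ∧
    ∀ m : ℝ, 1 < m → (∑ ω, p ω * ((M ω).length : ℝ)) ≤ m →
      entropyRV p (fun ω => (M ω).length) ≤ m * binEnt (1 / m) ∧
      entropyRV p M ≤ m * (1 + binEnt (1 / m)) := by
  have hM : entropyRV p M ≤ (∑ ω, p ω * ((M ω).length : ℝ))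
      + entropyRV p (fun ω => (M ω).length) := by
    simpa using entropyRV_le_expect_length_mul_add_entropyRV_length hp M
  refine ⟨hM, fun m hm hE => ?_⟩
  have hL := entropyRV_le_mul_binEnt_of_expect_le hp hlen hm hE
  exact ⟨hL, by linarith [mul_add m 1 (binEnt (1 / m))]⟩
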